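/- arXiv:0707.2352 — 3 statements merged into one kernel-verified Lean document; each statement's English description precedes it below -/
import Mathlib

section
/- Let V : T → ℝ be smooth and 1-periodic, β > 0, and let ν(dq) = Z^{-1} e^{−βV(q)} dq on T. Let χ : T → ℝ be a smooth periodic solution of −V′(q)χ′(q) + β^{-1}χ″(q) = V′(q). Then β^{-1}∫_T |1 + χ′(q)|² ν(dq) = 1/(β Z Ẑ) where Z = ∫_0^1 e^{−βV} dq and Ẑ = ∫_0^1 e^{βV} dq. -/
open Real MeasureTheory intervalIntegral

theorem smoluchowski_diffusion_formula (β : ℝ) (hβ : 0 < β)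
    (V : ℝ → ℝ) (hV : ContDiff ℝ (⊤ : ℕ∞) V) (hVper : Function.Periodic V 1)
    (χ : ℝ → ℝ) (hχ : ContDiff ℝ (⊤ : ℕ∞) χ) (hχper : Function.Periodic χ 1)
    (hcell : ∀ q : ℝ, -(deriv V q) * deriv χ q + β⁻¹ * deriv (deriv χ) q = deriv V q) :
    β⁻¹ * ∫ q in (0:ℝ)..1,
        (1 + deriv χ q) ^ 2 * (Real.exp (-β * V q) / ∫ x in (0:ℝ)..1, Real.exp (-β * V x))
      = 1 / (β * (∫ q in (0:ℝ)..1, Real.exp (-β * V q))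
          * (∫ q in (0:ℝ)..1, Real.exp (β * V q))) := by
  have hβ0 : (β:ℝ) ≠ 0 := ne_of_gt hβ
  have hVd : Differentiable ℝ V := hV.differentiable (by simp)
  have hχd : Differentiable ℝ χ := hχ.differentiable (by simp)
  have hχ1 := (contDiff_infty_iff_deriv.mp (hχ.of_le (by simp))).2
  have hχ1d : Differentiable ℝ (deriv χ) := hχ1.differentiable (by simp)
  set Z := ∫ x in (0:ℝ)..1, Real.exp (-β * V x) with hZdef
  set Zhat := ∫ q in (0:ℝ)..1, Real.exp (β * V q) with hZhatdef
  set g : ℝ → ℝ := fun q => Real.exp (-β * V q) * (1 + deriv χ q) with hg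
  have hgderiv : ∀ q, HasDerivAt g 0 q := by
    intro q
    have h1 : HasDerivAt (fun q => Real.exp (-β * V q))
        (Real.exp (-β * V q) * (-β * deriv V q)) q := by
      have := (((hVd q).hasDerivAt).const_mul (-β)).exp
      simpa [mul_comm] using this
    have h2 : HasDerivAt (fun q => 1 + deriv χ q) (deriv (deriv χ) q) q :=
      ((hχ1d q).hasDerivAt).const_add 1
    have hprod := h1.mul h2
    have hc := hcell q
    have hχ'' : deriv (deriv χ) q = β * (deriv V q * (1 + deriv χ q)) := by
      field_simp at hc
      nlinarith [hc]
    refine hprod.congr_deriv ?_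
    rw [hχ'']; ring
  have hgconst : ∀ q, g q = g 0 := fun q =>
    is_const_of_deriv_eq_zero (fun x => (hgderiv x).differentiableAt)
      (fun x => (hgderiv x).deriv) q 0
  have key : ∀ q, 1 + deriv χ q = g 0 * Real.exp (β * V q) := by
    intro q
    have hE : Real.exp (-β * V q) * Real.exp (β * V q) = 1 := by
      rw [← Real.exp_add]; simp
    rw [← hgconst q, hg]
    simp only
    rw [mul_comm (Real.exp (-β * V q)) _, mul_assoc, hE, mul_one]
  have hint : ∫ q in (0:ℝ)..1, deriv χ q = 0 := by
    rw [intervalIntegral.integral_deriv_eq_sub (fun x _ => hχd x)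
      ((hχ1.continuous).intervalIntegrable 0 1)]
    have := hχper 0
    simp only [zero_add] at this
    rw [this]; ring
  have hone : ∫ q in (0:ℝ)..1, (1 + deriv χ q) = 1 := by
    rw [intervalIntegral.integral_add (intervalIntegrable_const)
      ((hχ1.continuous).intervalIntegrable 0 1), hint]
    simp
  have hcZ : g 0 * Zhat = 1 := by
    have h1 : (∫ q in (0:ℝ)..1, g 0 * Real.exp (β * V q)) = g 0 * Zhat :=
      intervalIntegral.integral_const_mul _ _
    have h2 : (∫ q in (0:ℝ)..1, g 0 * Real.exp (β * V q))
        = ∫ q in (0:ℝ)..1, (1 + deriv χ q) :=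
      intervalIntegral.integral_congr (fun x _ => (key x).symm)
    rw [← h1, h2, hone]
  have hmain : ∫ q in (0:ℝ)..1, (1 + deriv χ q) ^ 2 * Real.exp (-β * V q) = g 0 := by
    have heq : ∀ q, (1 + deriv χ q) ^ 2 * Real.exp (-β * V q)
        = g 0 * (1 + deriv χ q) := by
      intro q
      have hE : Real.exp (β * V q) * Real.exp (-β * V q) = 1 := by
        rw [← Real.exp_add]; simp
      linear_combination ((1 + deriv χ q) * Real.exp (-β * V q)) * key q
        + g 0 * (1 + deriv χ q) * hE
    rw [intervalIntegral.integral_congr (fun x _ => heq x),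
      intervalIntegral.integral_const_mul, hone, mul_one]
  have hZpos : 0 < Z := by
    rw [hZdef]
    apply intervalIntegral.intervalIntegral_pos_of_pos_on
    · exact (Continuous.intervalIntegrable (by fun_prop) 0 1)
    · exact fun x _ => Real.exp_pos _
    · norm_num
  have hZhatpos : 0 < Zhat := by
    rw [hZhatdef]
    apply intervalIntegral.intervalIntegral_pos_of_pos_on
    · exact (Continuous.intervalIntegrable (by fun_prop) 0 1)
    · exact fun x _ => Real.exp_pos _
    · norm_num
  have hfold : (∫ q in (0:ℝ)..1, (1 + deriv χ q) ^ 2 * (Real.exp (-β * V q) / Z))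
      = g 0 / Z := by
    simp_rw [div_eq_mul_inv, ← mul_assoc]
    rw [intervalIntegral.integral_mul_const, hmain]
  rw [hfold]
  field_simp
  linear_combination hcZ
end

section
/- Let β > 0, E_0 ≥ 0, and suppose S : (E_0,∞) → (0,∞) satisfies S(z)/√(2z) → 1 as z → ∞ and Z_β = √(π/(2β))(1 + o(1)) as β → 0. If additionally S(z) ≥ c > 0 for all z and e^{−βz}/S(z) is integrable, then D*(β) = (2/(βZ_β))∫_{E_0}^∞ e^{−βz}/S(z) dz satisfies β D*(β) → 2 as β → 0. -/
open Real MeasureTheory Filter Set Topology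

/-!
Substituting `u = β z` gives `√β ∫_{E₀}^∞ e^{-βz} / S z dz = ∫_{βE₀}^∞ e^{-u} / (√β S(u/β)) du`.
As `β → 0` the new integrand tends to `e^{-u} / √(2u)` because `S z ~ √(2z)`, and it is dominated
by a multiple of `e^{-u} u^{-1/2}`: `S z ≥ √z / 2` for large `z` and `S ≥ c` elsewhere. Dominated
convergence and `Γ(1/2) = √π` give `√β ∫ ... → √(π/2)`, while `√β Z_β → √(π/2)` by hypothesis, so
`β D*(β) = 2 (√β ∫ ...) / (√β Z_β) → 2`.
-/

noncomputable def rescaledIntegrand (E₀ : ℝ) (S : ℝ → ℝ) (β : ℝ) : ℝ → ℝ :=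
  (Ioi (E₀ * β)).indicator fun u => exp (-u) / (√β * S (u / β))

lemma rpow_half_sub_one {u : ℝ} (hu : 0 ≤ u) : u ^ ((1 / 2 : ℝ) - 1) = (√u)⁻¹ := by
  rw [show (1 / 2 : ℝ) - 1 = -(1 / 2) by norm_num, rpow_neg hu, sqrt_eq_rpow]

lemma integral_exp_neg_div_sqrt_two_mul :
    ∫ u in Ioi 0, exp (-u) / √(2 * u) = √(π / 2) := by
  have hform : EqOn (fun u => exp (-u) / √(2 * u))
      (fun u => (√2)⁻¹ * (exp (-u) * u ^ ((1 / 2 : ℝ) - 1))) (Ioi 0) := fun u hu => by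
    dsimp only
    rw [rpow_half_sub_one (le_of_lt hu), sqrt_mul zero_le_two, div_eq_mul_inv, mul_inv]
    ring
  rw [setIntegral_congr_fun measurableSet_Ioi hform, integral_const_mul,
    ← Gamma_eq_integral one_half_pos, Gamma_one_half_eq, sqrt_div pi_pos.le, div_eq_inv_mul]

lemma tendsto_sqrt_mul_of_tendsto_div_sqrt {Z : ℝ → ℝ} {a : ℝ} (ha : 0 < a)
    (hZ : Tendsto (fun β => Z β / √(a / β)) (𝓝[>] 0) (𝓝 1)) :
    Tendsto (fun β => √β * Z β) (𝓝[>] 0) (𝓝 √a) := by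
  have hlim := hZ.const_mul √a
  rw [mul_one] at hlim
  refine hlim.congr' ?_
  filter_upwards [self_mem_nhdsWithin] with β (hβ : 0 < β)
  rw [sqrt_div ha.le, div_div_eq_mul_div, mul_div_assoc',
    mul_div_cancel_left₀ _ (sqrt_pos.2 ha).ne', mul_comm]

section

variable {E₀ : ℝ} {S : ℝ → ℝ} {β : ℝ}

lemma exp_neg_div_sqrt_mul_comp_mul (hβ : 0 < β) (x : ℝ) :
    exp (-(x * β)) / (√β * S (x * β / β)) = (√β)⁻¹ * (exp (-β * x) / S x) := by
  rw [mul_div_cancel_right₀ x hβ.ne', neg_mul, mul_comm β, div_mul_eq_div_div_swap,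
    inv_mul_eq_div]

lemma integral_rescaledIntegrand (hE₀ : 0 ≤ E₀) (hβ : 0 < β) :
    ∫ u in Ioi 0, rescaledIntegrand E₀ S β u = √β * ∫ z in Ioi E₀, exp (-β * z) / S z := by
  rw [rescaledIntegrand, integral_indicator measurableSet_Ioi,
    Measure.restrict_restrict measurableSet_Ioi, Ioi_inter_Ioi,
    sup_eq_left.mpr (by positivity : (0:ℝ) ≤ E₀ * β),
    ← integral_comp_mul_right_Ioi' _ _ hβ]
  simp only [exp_neg_div_sqrt_mul_comp_mul hβ, integral_const_mul, smul_eq_mul, ← mul_assoc]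
  congr 1
  rw [← div_eq_mul_inv, div_sqrt]

lemma integrable_rescaledIntegrand (hβ : 0 < β)
    (hint : IntegrableOn (fun z => exp (-β * z) / S z) (Ioi E₀)) :
    Integrable (rescaledIntegrand E₀ S β) := by
  rw [rescaledIntegrand, integrable_indicator_iff measurableSet_Ioi,
    ← integrableOn_Ioi_comp_mul_right_iff _ _ hβ]
  simp only [exp_neg_div_sqrt_mul_comp_mul hβ]
  exact hint.const_mul _

lemma exists_half_sqrt_le_of_tendsto_div_sqrt
    (hS : Tendsto (fun z => S z / √(2 * z)) atTop (𝓝 1)) :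
    ∃ M > 0, ∀ z ≥ M, √z / 2 ≤ S z := by
  obtain ⟨M, hM⟩ := eventually_atTop.mp (hS.eventually (eventually_gt_nhds one_half_lt_one))
  refine ⟨max M 1, by positivity, fun z hz => ?_⟩
  have hz0 : 0 < z := by linarith [le_max_right M 1]
  have hsqrt : √z ≤ √(2 * z) := sqrt_le_sqrt (by linarith)
  have := (lt_div_iff₀ (by positivity)).mp (hM z (le_of_max_le_left hz))
  linarith

lemma min_mul_sqrt_le_sqrt_mul_comp_div {c M : ℝ} (hc : 0 < c) (hM : 0 < M)
    (hSlow : ∀ z ∈ Ioi E₀, c ≤ S z) (hSM : ∀ z ≥ M, √z / 2 ≤ S z) (hβ : 0 < β) {u : ℝ}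
    (hu : 0 ≤ u) (huβ : E₀ * β < u) :
    min (1 / 2) (c / √M) * √u ≤ √β * S (u / β) := by
  rcases le_or_gt M (u / β) with hlarge | hsmall
  · calc min (1 / 2) (c / √M) * √u ≤ 1 / 2 * √u := by gcongr; exact min_le_left _ _
      _ = √β * (√(u / β) / 2) := by
          rw [sqrt_div hu, mul_div_assoc', mul_div_cancel₀ _ (sqrt_pos.2 hβ).ne']; ring
      _ ≤ √β * S (u / β) := by gcongr; exact hSM _ hlarge
  · have hsqrt : √u / √M ≤ √β := by
      rw [← sqrt_div hu]
      exact sqrt_le_sqrt ((div_le_iff₀ hM).2 (by rw [div_lt_iff₀ hβ] at hsmall; linarith))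
    calc min (1 / 2) (c / √M) * √u ≤ c / √M * √u := by gcongr; exact min_le_right _ _
      _ = √u / √M * c := by ring
      _ ≤ √β * S (u / β) := by
          gcongr
          exact hSlow _ ((lt_div_iff₀ hβ).2 huβ)

lemma norm_rescaledIntegrand_le {m : ℝ} (hm : 0 < m)
    (hlow : ∀ u, 0 < u → E₀ * β < u → m * √u ≤ √β * S (u / β)) {u : ℝ} (hu : 0 < u) :
    ‖rescaledIntegrand E₀ S β u‖ ≤ m⁻¹ * (exp (-u) * u ^ ((1 / 2 : ℝ) - 1)) := by
  rw [rpow_half_sub_one hu.le, rescaledIntegrand, norm_indicator_eq_indicator_norm]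
  by_cases huβ : u ∈ Ioi (E₀ * β)
  · rw [indicator_of_mem huβ, norm_div, norm_of_nonneg (exp_pos _).le]
    calc exp (-u) / ‖√β * S (u / β)‖ ≤ exp (-u) / (m * √u) := by
          gcongr
          exact (hlow u hu huβ).trans (le_abs_self _)
      _ = m⁻¹ * (exp (-u) * (√u)⁻¹) := by rw [div_eq_mul_inv, mul_inv]; ring
  · rw [indicator_of_notMem huβ]
    positivity

lemma tendsto_sqrt_mul_comp_div (hS : Tendsto (fun z => S z / √(2 * z)) atTop (𝓝 1))
    {u : ℝ} (hu : 0 < u) :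
    Tendsto (fun β => √β * S (u / β)) (𝓝[>] 0) (𝓝 √(2 * u)) := by
  have hdiv : Tendsto (fun β => u / β) (𝓝[>] 0) atTop := by
    simpa only [div_eq_mul_inv] using tendsto_inv_nhdsGT_zero.const_mul_atTop hu
  have hlim := (hS.comp hdiv).const_mul √(2 * u)
  rw [mul_one] at hlim
  refine hlim.congr' ?_
  filter_upwards [self_mem_nhdsWithin] with β (hβ : 0 < β)
  have hsqrt : √(2 * (u / β)) = √(2 * u) / √β := by rw [← mul_div_assoc, sqrt_div (by positivity)]
  have : 0 < √β := by positivity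
  simp only [Function.comp, hsqrt]
  field_simp

lemma tendsto_rescaledIntegrand (hS : Tendsto (fun z => S z / √(2 * z)) atTop (𝓝 1))
    {u : ℝ} (hu : 0 < u) :
    Tendsto (fun β => rescaledIntegrand E₀ S β u) (𝓝[>] 0) (𝓝 (exp (-u) / √(2 * u))) := by
  have hcut : ∀ᶠ β in 𝓝[>] (0 : ℝ), E₀ * β < u := by
    have : Tendsto (fun β => E₀ * β) (𝓝[>] 0) (𝓝 0) := by
      simpa using (tendsto_nhdsWithin_of_tendsto_nhds (tendsto_id (x := 𝓝 (0 : ℝ)))).const_mul E₀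
    exact this.eventually_lt_const hu
  refine (tendsto_const_nhds.div (tendsto_sqrt_mul_comp_div hS hu) (by positivity)).congr' ?_
  filter_upwards [hcut] with β hβ
  rw [rescaledIntegrand, indicator_of_mem (mem_Ioi.2 hβ), Pi.div_apply]

end

lemma tendsto_sqrt_mul_integral_exp_neg_mul_div {E₀ c : ℝ} {S : ℝ → ℝ} (hE₀ : 0 ≤ E₀)
    (hc : 0 < c) (hSlow : ∀ z ∈ Ioi E₀, c ≤ S z)
    (hS : Tendsto (fun z => S z / √(2 * z)) atTop (𝓝 1))
    (hSint : ∀ β : ℝ, 0 < β → IntegrableOn (fun z => exp (-β * z) / S z) (Ioi E₀)) :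
    Tendsto (fun β => √β * ∫ z in Ioi E₀, exp (-β * z) / S z) (𝓝[>] 0) (𝓝 √(π / 2)) := by
  obtain ⟨M, hM, hSM⟩ := exists_half_sqrt_le_of_tendsto_div_sqrt hS
  set m := min (1 / 2) (c / √M)
  have hm : 0 < m := by positivity
  have hdct := tendsto_integral_filter_of_dominated_convergence
    (μ := volume.restrict (Ioi 0)) (l := 𝓝[>] 0) (F := rescaledIntegrand E₀ S)
    (f := fun u => exp (-u) / √(2 * u)) (fun u => m⁻¹ * (exp (-u) * u ^ ((1 / 2 : ℝ) - 1)))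
    (eventually_mem_nhdsWithin.mono fun β hβ =>
      (integrable_rescaledIntegrand hβ (hSint β hβ)).restrict.aestronglyMeasurable)
    (eventually_mem_nhdsWithin.mono fun β hβ => (ae_restrict_iff' measurableSet_Ioi).2 <|
      ae_of_all _ fun u hu => norm_rescaledIntegrand_le hm
        (fun v hv hvβ => min_mul_sqrt_le_sqrt_mul_comp_div hc hM hSlow hSM hβ hv.le hvβ) hu)
    ((GammaIntegral_convergent one_half_pos).const_mul _)
    ((ae_restrict_iff' measurableSet_Ioi).2 <| ae_of_all _ fun u hu =>
      tendsto_rescaledIntegrand hS hu)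
  rw [integral_exp_neg_div_sqrt_two_mul] at hdct
  refine hdct.congr' ?_
  filter_upwards [self_mem_nhdsWithin] with β hβ
  exact integral_rescaledIntegrand hE₀ hβ

theorem FW_diffusivity_high_temperature_general
    (E₀ c : ℝ) (hE₀ : 0 ≤ E₀) (hc : 0 < c)
    (S : ℝ → ℝ)
    (hSlow : ∀ z ∈ Set.Ioi E₀, c ≤ S z)
    (hSasymp : Tendsto (fun z => S z / Real.sqrt (2 * z)) atTop (nhds 1))
    (hSint : ∀ β : ℝ, 0 < β →
      IntegrableOn (fun z => Real.exp (-β * z) / S z) (Set.Ioi E₀))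
    (Z : ℝ → ℝ)
    (hZ : Tendsto (fun β => Z β / Real.sqrt (π / (2 * β)))
      (nhdsWithin 0 (Set.Ioi (0:ℝ))) (nhds 1)) :
    Tendsto
      (fun β => β * ((2 / (β * Z β)) * ∫ z in Set.Ioi E₀, Real.exp (-β * z) / S z))
      (nhdsWithin 0 (Set.Ioi (0:ℝ))) (nhds 2) := by
  have hI := tendsto_sqrt_mul_integral_exp_neg_mul_div hE₀ hc hSlow hSasymp hSint
  have hZ' : Tendsto (fun β => √β * Z β) (𝓝[>] 0) (𝓝 √(π / 2)) :=
    tendsto_sqrt_mul_of_tendsto_div_sqrt (by positivity) <| by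
      simpa only [div_mul_eq_div_div] using hZ
  have hsqrt : √(π / 2) ≠ 0 := by positivity
  have hratio := (hI.const_mul 2).div hZ' hsqrt
  rw [mul_div_assoc, div_self hsqrt, mul_one] at hratio
  refine hratio.congr' ?_
  filter_upwards [self_mem_nhdsWithin] with β (hβ : 0 < β)
  rw [Pi.div_apply, mul_left_comm, mul_div_mul_left _ _ (sqrt_pos.2 hβ).ne',
    ← mul_div_mul_left _ (Z β) hβ.ne']
  ring

theorem FW_diffusivity_high_temperature
    (E₀ c : ℝ) (hE₀ : 0 ≤ E₀) (hc : 0 < c)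
    (S : ℝ → ℝ) (hSpos : ∀ z ∈ Set.Ioi E₀, 0 < S z)
    (hSlow : ∀ z ∈ Set.Ioi E₀, c ≤ S z)
    (hSasymp : Tendsto (fun z => S z / Real.sqrt (2 * z)) atTop (nhds 1))
    (hSint : ∀ β : ℝ, 0 < β →
      IntegrableOn (fun z => Real.exp (-β * z) / S z) (Set.Ioi E₀))
    (Z : ℝ → ℝ)
    (hZ : Tendsto (fun β => Z β / Real.sqrt (π / (2 * β)))
      (nhdsWithin 0 (Set.Ioi (0:ℝ))) (nhds 1)) :
    Tendsto
      (fun β => β * ((2 / (β * Z β)) * ∫ z in Set.Ioi E₀, Real.exp (-β * z) / S z))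
      (nhdsWithin 0 (Set.Ioi (0:ℝ))) (nhds 2) :=
  FW_diffusivity_high_temperature_general E₀ c hE₀ hc S hSlow hSasymp hSint Z hZ
end

section
/- Let μ be a finite measure on T × ℝ with smooth density w > 0, and let g : T × ℝ → ℝ be smooth with g, ∂_p g, ∂_q g, pg ∈ L²(μ_{δ/2}) where μ_{δ/2} has density e^{−δH/2} (H(p,q) = p²/2 + V(q), V smooth periodic). Then g ∈ L⁴(μ_δ) and ‖g‖²_{L⁴(μ_δ)} ≤ C‖g‖_{δ/2}(‖g‖_{δ/2} + ‖∂_p g‖_{δ/2} + ‖∂_q g‖_{δ/2} + ‖pg‖_{δ/2}) for a constant C independent of g. -/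
open Real MeasureTheory
open scoped ENNReal NNReal
set_option maxHeartbeats 1000000

/-- The (unnormalized) measure on `T × ℝ` with density `e^{-δ H(p,q)}`,
`H(p,q) = p²/2 + V(q)`; the torus is realized as `q ∈ (0,1]`.  Points are `x = (q, p)`. -/
noncomputable def wMeasure (V : ℝ → ℝ) (δ : ℝ) : Measure (ℝ × ℝ) :=
  ((volume.restrict (Set.Ioc (0:ℝ) 1)).prod volume).withDensity
    (fun x => ENNReal.ofReal (Real.exp (-δ * (x.2 ^ 2 / 2 + V x.1))))

/-- The `L²(μ_δ)` norm. -/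
noncomputable def wNorm (V : ℝ → ℝ) (δ : ℝ) (g : ℝ × ℝ → ℝ) : ℝ :=
  Real.sqrt (∫ x, (g x) ^ 2 ∂(wMeasure V δ))

/-- partial derivative in `q` of a function `g q p`. -/
noncomputable def pdq (g : ℝ → ℝ → ℝ) : ℝ × ℝ → ℝ := fun x => deriv (fun q' => g q' x.2) x.1

/-- partial derivative in `p` of a function `g q p`. -/
noncomputable def pdp (g : ℝ → ℝ → ℝ) : ℝ × ℝ → ℝ := fun x => deriv (fun p' => g x.1 p') x.2

/-! ### Auxiliary lemmas -/

private lemma ftc_aux {f f' : ℝ → ℝ} (hd : ∀ x, HasDerivAt f (f' x) x) (hc : Continuous f')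
    (a : ℝ) : f a ≤ (∫ s in (a-1)..a, f s) + ∫ s in (a-1)..a, |f' s| := by
  have hf : Continuous f := by
    have : Differentiable ℝ f := fun x => (hd x).differentiableAt
    exact this.continuous
  have h1 : ∀ s ∈ Set.Icc (a-1) a, f a ≤ f s + ∫ t in (a-1)..a, |f' t| := by
    intro s hs
    have hfc : ∫ t in s..a, f' t = f a - f s :=
      intervalIntegral.integral_eq_sub_of_hasDerivAt (fun x _ => hd x) (hc.intervalIntegrable _ _)
    have h2 : ∫ t in s..a, f' t ≤ ∫ t in s..a, |f' t| :=
      intervalIntegral.integral_mono_on hs.2 (hc.intervalIntegrable _ _)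
        (hc.abs.intervalIntegrable _ _) (fun x _ => le_abs_self _)
    have h3 : ∫ t in s..a, |f' t| ≤ ∫ t in (a-1)..a, |f' t| :=
      intervalIntegral.integral_mono_interval hs.1 hs.2 le_rfl
        (ae_of_all _ fun x => abs_nonneg _) (hc.abs.intervalIntegrable _ _)
    linarith
  have h4 : (∫ _s in (a-1)..a, f a) ≤ ∫ s in (a-1)..a, (f s + ∫ t in (a-1)..a, |f' t|) :=
    intervalIntegral.integral_mono_on (by linarith) intervalIntegrable_const
      ((hf.intervalIntegrable _ _).add intervalIntegrable_const) h1
  rw [intervalIntegral.integral_const, intervalIntegral.integral_add (hf.intervalIntegrable _ _)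
    intervalIntegrable_const, intervalIntegral.integral_const] at h4
  simpa using h4

private lemma pdq_has {g : ℝ → ℝ → ℝ} (hg : ContDiff ℝ (⊤ : ℕ∞) (Function.uncurry g)) (x : ℝ × ℝ) :
    HasDerivAt (fun q' => g q' x.2) (fderiv ℝ (Function.uncurry g) x ((1:ℝ),(0:ℝ))) x.1 := by
  have h1 : HasFDerivAt (Function.uncurry g) (fderiv ℝ (Function.uncurry g) x) x :=
    (hg.differentiable (by simp) x).hasFDerivAt
  have h2 : HasDerivAt (fun q' : ℝ => (q', x.2)) ((1:ℝ),(0:ℝ)) x.1 :=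
    (hasDerivAt_id x.1).prodMk (hasDerivAt_const x.1 x.2)
  exact h1.comp_hasDerivAt_of_eq x.1 h2 (by simp)

private lemma pdq_eq {g : ℝ → ℝ → ℝ} (hg : ContDiff ℝ (⊤ : ℕ∞) (Function.uncurry g)) (x : ℝ × ℝ) :
    pdq g x = fderiv ℝ (Function.uncurry g) x ((1:ℝ),(0:ℝ)) := (pdq_has hg x).deriv

private lemma pdq_hasAt {g : ℝ → ℝ → ℝ} (hg : ContDiff ℝ (⊤ : ℕ∞) (Function.uncurry g)) (x : ℝ × ℝ) :
    HasDerivAt (fun q' => g q' x.2) (pdq g x) x.1 := by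
  rw [pdq_eq hg]; exact pdq_has hg x

private lemma pdq_cont {g : ℝ → ℝ → ℝ} (hg : ContDiff ℝ (⊤ : ℕ∞) (Function.uncurry g)) :
    Continuous (pdq g) := by
  have : Continuous fun x : ℝ × ℝ => fderiv ℝ (Function.uncurry g) x ((1:ℝ),(0:ℝ)) :=
    (hg.continuous_fderiv (by simp)).clm_apply continuous_const
  exact this.congr fun x => (pdq_eq hg x).symm

private lemma pdp_has {g : ℝ → ℝ → ℝ} (hg : ContDiff ℝ (⊤ : ℕ∞) (Function.uncurry g)) (x : ℝ × ℝ) :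
    HasDerivAt (fun p' => g x.1 p') (fderiv ℝ (Function.uncurry g) x ((0:ℝ),(1:ℝ))) x.2 := by
  have h1 : HasFDerivAt (Function.uncurry g) (fderiv ℝ (Function.uncurry g) x) x :=
    (hg.differentiable (by simp) x).hasFDerivAt
  have h2 : HasDerivAt (fun p' : ℝ => (x.1, p')) ((0:ℝ),(1:ℝ)) x.2 :=
    (hasDerivAt_const x.2 x.1).prodMk (hasDerivAt_id x.2)
  exact h1.comp_hasDerivAt_of_eq x.2 h2 (by simp)

private lemma pdp_eq {g : ℝ → ℝ → ℝ} (hg : ContDiff ℝ (⊤ : ℕ∞) (Function.uncurry g)) (x : ℝ × ℝ) :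
    pdp g x = fderiv ℝ (Function.uncurry g) x ((0:ℝ),(1:ℝ)) := (pdp_has hg x).deriv

private lemma pdp_hasAt {g : ℝ → ℝ → ℝ} (hg : ContDiff ℝ (⊤ : ℕ∞) (Function.uncurry g)) (x : ℝ × ℝ) :
    HasDerivAt (fun p' => g x.1 p') (pdp g x) x.2 := by
  rw [pdp_eq hg]; exact pdp_has hg x

private lemma pdp_cont {g : ℝ → ℝ → ℝ} (hg : ContDiff ℝ (⊤ : ℕ∞) (Function.uncurry g)) :
    Continuous (pdp g) := by
  have : Continuous fun x : ℝ × ℝ => fderiv ℝ (Function.uncurry g) x ((0:ℝ),(1:ℝ)) :=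
    (hg.continuous_fderiv (by simp)).clm_apply continuous_const
  exact this.congr fun x => (pdp_eq hg x).symm

noncomputable def wfn (V : ℝ → ℝ) (δ : ℝ) : ℝ × ℝ → ℝ :=
  fun x => exp (-(δ/4) * (x.2^2/2 + V x.1))
noncomputable def ufn (V : ℝ → ℝ) (δ : ℝ) (g : ℝ → ℝ → ℝ) : ℝ × ℝ → ℝ :=
  fun x => g x.1 x.2 * wfn V δ x
noncomputable def Gqf (V : ℝ → ℝ) (δ : ℝ) (g : ℝ → ℝ → ℝ) : ℝ × ℝ → ℝ :=
  fun x => pdq g x - δ/4 * deriv V x.1 * g x.1 x.2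
noncomputable def Gpf (δ : ℝ) (g : ℝ → ℝ → ℝ) : ℝ × ℝ → ℝ :=
  fun x => pdp g x - δ/4 * x.2 * g x.1 x.2

section Aux

variable {V : ℝ → ℝ} {δ : ℝ} {g : ℝ → ℝ → ℝ}

private lemma wfn_cont (hV : ContDiff ℝ (⊤ : ℕ∞) V) : Continuous (wfn V δ) := by
  apply Real.continuous_exp.comp
  exact (continuous_const.mul (((continuous_snd.pow 2).div_const 2).add
    (hV.continuous.comp continuous_fst)))

private lemma gfn_cont (hg : ContDiff ℝ (⊤ : ℕ∞) (Function.uncurry g)) :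
    Continuous (fun x : ℝ × ℝ => g x.1 x.2) := hg.continuous

private lemma ufn_cont (hV : ContDiff ℝ (⊤ : ℕ∞) V) (hg : ContDiff ℝ (⊤ : ℕ∞) (Function.uncurry g)) :
    Continuous (ufn V δ g) := (gfn_cont hg).mul (wfn_cont hV)

private lemma Gqf_cont (hV : ContDiff ℝ (⊤ : ℕ∞) V) (hg : ContDiff ℝ (⊤ : ℕ∞) (Function.uncurry g)) :
    Continuous (Gqf V δ g) := by
  refine (pdq_cont hg).sub ?_
  exact (continuous_const.mul ((hV.continuous_deriv (by simp)).comp continuous_fst)).mul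
    (gfn_cont hg)

private lemma Gpf_cont (hg : ContDiff ℝ (⊤ : ℕ∞) (Function.uncurry g)) : Continuous (Gpf δ g) := by
  refine (pdp_cont hg).sub ?_
  exact (continuous_const.mul continuous_snd).mul (gfn_cont hg)

private lemma u_hasq (hV : ContDiff ℝ (⊤ : ℕ∞) V) (hg : ContDiff ℝ (⊤ : ℕ∞) (Function.uncurry g)) (p s : ℝ) :
    HasDerivAt (fun q' => ufn V δ g (q', p)) (Gqf V δ g (s, p) * wfn V δ (s, p)) s := by
  have hgp : HasDerivAt (fun q' => g q' p) (pdq g (s, p)) s := pdq_hasAt hg (s, p)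
  have hVd : HasDerivAt V (deriv V s) s := ((hV.differentiable (by simp)) s).hasDerivAt
  have hin : HasDerivAt (fun q' : ℝ => -(δ/4) * (p^2/2 + V q')) (-(δ/4) * deriv V s) s :=
    (((hasDerivAt_const s (p^2/2)).add hVd).const_mul (-(δ/4))).congr_deriv (by ring)
  have hw : HasDerivAt (fun q' => wfn V δ (q', p))
      (-(δ/4) * deriv V s * wfn V δ (s, p)) s := by
    have := hin.exp
    simpa [wfn, mul_comm] using this
  have := hgp.mul hw
  refine this.congr_deriv ?_
  simp only [Gqf, ufn, wfn]
  ring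

private lemma u_hasp (hV : ContDiff ℝ (⊤ : ℕ∞) V) (hg : ContDiff ℝ (⊤ : ℕ∞) (Function.uncurry g)) (q t : ℝ) :
    HasDerivAt (fun p' => ufn V δ g (q, p')) (Gpf δ g (q, t) * wfn V δ (q, t)) t := by
  have hgp : HasDerivAt (fun p' => g q p') (pdp g (q, t)) t := pdp_hasAt hg (q, t)
  have hsq : HasDerivAt (fun p' : ℝ => p'^2/2) t t := by
    simpa using (hasDerivAt_pow 2 t).div_const 2
  have hin : HasDerivAt (fun p' : ℝ => -(δ/4) * (p'^2/2 + V q)) (-(δ/4) * t) t :=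
    ((hsq.add (hasDerivAt_const t (V q))).const_mul (-(δ/4))).congr_deriv (by ring)
  have hw : HasDerivAt (fun p' => wfn V δ (q, p')) (-(δ/4) * t * wfn V δ (q, t)) t := by
    have := hin.exp
    simpa [wfn, mul_comm] using this
  have := hgp.mul hw
  refine this.congr_deriv ?_
  simp only [Gpf, ufn, wfn]
  ring

private lemma deriv_per {h : ℝ → ℝ} (hper : Function.Periodic h 1) :
    Function.Periodic (deriv h) 1 := by
  intro x
  have heq : (fun y => h (y + 1)) = h := funext fun y => hper y
  calc deriv h (x + 1) = deriv (fun y => h (y + 1)) x := (deriv_comp_add_const h 1 x).symm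
  _ = deriv h x := by rw [heq]

private lemma pdq_per (hgper : ∀ q p, g (q + 1) p = g q p) (q p : ℝ) :
    pdq g (q + 1, p) = pdq g (q, p) := by
  have h : Function.Periodic (fun q' => g q' p) 1 := fun s => hgper s p
  exact deriv_per h q

private lemma bound_q (hV : ContDiff ℝ (⊤ : ℕ∞) V) (hVper : Function.Periodic V 1)
    (hg : ContDiff ℝ (⊤ : ℕ∞) (Function.uncurry g)) (hgper : ∀ q p, g (q + 1) p = g q p)
    (x : ℝ × ℝ) :
    (ufn V δ g x)^2 ≤ (∫ s in (0:ℝ)..1, (ufn V δ g (s, x.2))^2)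
      + ∫ s in (0:ℝ)..1, |2 * ufn V δ g (s, x.2) * (Gqf V δ g (s, x.2) * wfn V δ (s, x.2))| := by
  obtain ⟨a, p⟩ := x
  set f : ℝ → ℝ := fun s => (ufn V δ g (s, p))^2 with hf
  set f' : ℝ → ℝ := fun s => 2 * ufn V δ g (s, p) * (Gqf V δ g (s, p) * wfn V δ (s, p)) with hf'
  have hd : ∀ s, HasDerivAt f (f' s) s := by
    intro s
    exact ((u_hasq hV hg p s).pow 2).congr_deriv (by simp [hf']; try ring)
  have hc : Continuous f' := by
    have h1 : Continuous fun s : ℝ => (s, p) := continuous_id.prodMk continuous_const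
    exact (continuous_const.mul ((ufn_cont hV hg).comp h1)).mul
      (((Gqf_cont hV hg).comp h1).mul ((wfn_cont hV).comp h1))
  have key := ftc_aux hd hc a
  have hperu : Function.Periodic (fun s => ufn V δ g (s, p)) 1 := by
    intro s; simp only [ufn, wfn]
    rw [hgper s p, hVper s]
  have hperf : Function.Periodic f 1 := by
    intro s
    have h := hperu s
    dsimp only at h
    simp only [hf, h]
  have hperf' : Function.Periodic (fun s => |f' s|) 1 := by
    intro s
    have h2 : f' (s + 1) = f' s := by
      simp only [hf', Gqf, ufn, wfn]
      rw [hgper s p, hVper s, pdq_per hgper s p, deriv_per hVper s]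
    simp [h2]
  have e1 : (∫ s in (a-1)..a, f s) = ∫ s in (0:ℝ)..1, f s := by
    have := hperf.intervalIntegral_add_eq (a - 1) 0
    simpa using this
  have e2 : (∫ s in (a-1)..a, |f' s|) = ∫ s in (0:ℝ)..1, |f' s| := by
    have := hperf'.intervalIntegral_add_eq (a - 1) 0
    simpa using this
  rw [e1, e2] at key
  exact key

private lemma bound_p (hV : ContDiff ℝ (⊤ : ℕ∞) V) (hg : ContDiff ℝ (⊤ : ℕ∞) (Function.uncurry g))
    (x : ℝ × ℝ) :
    (ufn V δ g x)^2 ≤ (∫ t in (x.2-1)..x.2, (ufn V δ g (x.1, t))^2)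
      + ∫ t in (x.2-1)..x.2, |2 * ufn V δ g (x.1, t) * (Gpf δ g (x.1, t) * wfn V δ (x.1, t))| := by
  obtain ⟨q, b⟩ := x
  set f : ℝ → ℝ := fun t => (ufn V δ g (q, t))^2 with hf
  set f' : ℝ → ℝ := fun t => 2 * ufn V δ g (q, t) * (Gpf δ g (q, t) * wfn V δ (q, t)) with hf'
  have hd : ∀ t, HasDerivAt f (f' t) t := by
    intro t
    exact ((u_hasp hV hg q t).pow 2).congr_deriv (by simp [hf']; try ring)
  have hc : Continuous f' := by
    have h1 : Continuous fun t : ℝ => (q, t) := continuous_const.prodMk continuous_id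
    exact (continuous_const.mul ((ufn_cont hV hg).comp h1)).mul
      (((Gpf_cont hg).comp h1).mul ((wfn_cont hV).comp h1))
  exact ftc_aux hd hc b

private lemma ob1 (hV : ContDiff ℝ (⊤ : ℕ∞) V) (hVper : Function.Periodic V 1)
    (hg : ContDiff ℝ (⊤ : ℕ∞) (Function.uncurry g)) (hgper : ∀ q p, g (q + 1) p = g q p)
    (x : ℝ × ℝ) :
    ENNReal.ofReal ((ufn V δ g x)^2) ≤ ∫⁻ s in Set.Ioc (0:ℝ) 1,
      ENNReal.ofReal ((ufn V δ g (s, x.2))^2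
        + |2 * ufn V δ g (s, x.2) * (Gqf V δ g (s, x.2) * wfn V δ (s, x.2))|) := by
  have h1 : Continuous fun s : ℝ => (s, x.2) := continuous_id.prodMk continuous_const
  have hcf : Continuous fun s : ℝ => (ufn V δ g (s, x.2))^2 := (((ufn_cont hV hg).comp h1).pow 2)
  have hcf' : Continuous fun s : ℝ =>
      |2 * ufn V δ g (s, x.2) * (Gqf V δ g (s, x.2) * wfn V δ (s, x.2))| :=
    ((continuous_const.mul ((ufn_cont hV hg).comp h1)).mul
      (((Gqf_cont hV hg).comp h1).mul ((wfn_cont hV).comp h1))).abs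
  have key := bound_q (δ := δ) hV hVper hg hgper x
  have e1 : (∫ s in (0:ℝ)..1, (ufn V δ g (s, x.2))^2)
      + (∫ s in (0:ℝ)..1, |2 * ufn V δ g (s, x.2) * (Gqf V δ g (s, x.2) * wfn V δ (s, x.2))|)
      = ∫ s in (0:ℝ)..1, ((ufn V δ g (s, x.2))^2
        + |2 * ufn V δ g (s, x.2) * (Gqf V δ g (s, x.2) * wfn V δ (s, x.2))|) :=
    (intervalIntegral.integral_add (hcf.intervalIntegrable _ _)
      (hcf'.intervalIntegrable _ _)).symm
  rw [e1] at key
  rw [intervalIntegral.integral_of_le (zero_le_one)] at key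
  calc ENNReal.ofReal ((ufn V δ g x)^2) ≤ ENNReal.ofReal (∫ s in Set.Ioc (0:ℝ) 1,
        ((ufn V δ g (s, x.2))^2
          + |2 * ufn V δ g (s, x.2) * (Gqf V δ g (s, x.2) * wfn V δ (s, x.2))|)) :=
      ENNReal.ofReal_le_ofReal key
  _ = _ := by
      apply ofReal_integral_eq_lintegral_ofReal
      · exact (hcf.add hcf').integrableOn_Ioc
      · exact ae_of_all _ fun s => by positivity

private lemma ob2 (hV : ContDiff ℝ (⊤ : ℕ∞) V) (hg : ContDiff ℝ (⊤ : ℕ∞) (Function.uncurry g)) (x : ℝ × ℝ) :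
    ENNReal.ofReal ((ufn V δ g x)^2) ≤ ∫⁻ t : ℝ,
      ENNReal.ofReal ((ufn V δ g (x.1, t))^2
        + |2 * ufn V δ g (x.1, t) * (Gpf δ g (x.1, t) * wfn V δ (x.1, t))|) := by
  have h1 : Continuous fun t : ℝ => (x.1, t) := continuous_const.prodMk continuous_id
  have hcf : Continuous fun t : ℝ => (ufn V δ g (x.1, t))^2 := (((ufn_cont hV hg).comp h1).pow 2)
  have hcf' : Continuous fun t : ℝ =>
      |2 * ufn V δ g (x.1, t) * (Gpf δ g (x.1, t) * wfn V δ (x.1, t))| :=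
    ((continuous_const.mul ((ufn_cont hV hg).comp h1)).mul
      (((Gpf_cont hg).comp h1).mul ((wfn_cont hV).comp h1))).abs
  have key := bound_p (δ := δ) hV hg x
  have e1 : (∫ t in (x.2-1)..x.2, (ufn V δ g (x.1, t))^2)
      + (∫ t in (x.2-1)..x.2, |2 * ufn V δ g (x.1, t) * (Gpf δ g (x.1, t) * wfn V δ (x.1, t))|)
      = ∫ t in (x.2-1)..x.2, ((ufn V δ g (x.1, t))^2
        + |2 * ufn V δ g (x.1, t) * (Gpf δ g (x.1, t) * wfn V δ (x.1, t))|) :=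
    (intervalIntegral.integral_add (hcf.intervalIntegrable _ _)
      (hcf'.intervalIntegrable _ _)).symm
  rw [e1] at key
  rw [intervalIntegral.integral_of_le (by linarith : x.2 - 1 ≤ x.2)] at key
  calc ENNReal.ofReal ((ufn V δ g x)^2)
      ≤ ENNReal.ofReal (∫ t in Set.Ioc (x.2-1) x.2, ((ufn V δ g (x.1, t))^2
        + |2 * ufn V δ g (x.1, t) * (Gpf δ g (x.1, t) * wfn V δ (x.1, t))|)) :=
      ENNReal.ofReal_le_ofReal key
  _ = ∫⁻ t in Set.Ioc (x.2-1) x.2, ENNReal.ofReal ((ufn V δ g (x.1, t))^2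
        + |2 * ufn V δ g (x.1, t) * (Gpf δ g (x.1, t) * wfn V δ (x.1, t))|) := by
      apply ofReal_integral_eq_lintegral_ofReal
      · exact (hcf.add hcf').integrableOn_Ioc
      · exact ae_of_all _ fun s => by positivity
  _ ≤ _ := setLIntegral_le_lintegral _ _

private lemma ofreal_abs_rpow_two (r : ℝ) :
    ENNReal.ofReal |r| ^ (2:ℝ) = ENNReal.ofReal (r^2) := by
  rw [ENNReal.ofReal_rpow_of_nonneg (abs_nonneg r) (by norm_num)]
  congr 1
  rw [show (2:ℝ) = ((2:ℕ):ℝ) by norm_num, Real.rpow_natCast]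
  exact sq_abs r

private lemma holder_two {ν : Measure (ℝ × ℝ)} {a b : ℝ × ℝ → ℝ}
    (ha : Continuous a) (hb : Continuous b) :
    (∫⁻ x, ENNReal.ofReal |2 * a x * b x| ∂ν)
      ≤ 2 * ((∫⁻ x, ENNReal.ofReal ((a x)^2) ∂ν) ^ (1/2:ℝ)
        * (∫⁻ x, ENNReal.ofReal ((b x)^2) ∂ν) ^ (1/2:ℝ)) := by
  have e1 : ∀ x, ENNReal.ofReal |2 * a x * b x|
      = 2 * (ENNReal.ofReal |a x| * ENNReal.ofReal |b x|) := by
    intro x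
    rw [← ENNReal.ofReal_mul (abs_nonneg _), ← ENNReal.ofReal_ofNat,
      ← ENNReal.ofReal_mul (by norm_num)]
    congr 1
    rw [abs_mul, abs_mul]
    simp [abs_of_nonneg, mul_assoc]
  simp_rw [e1]
  rw [lintegral_const_mul 2 (f := fun x => ENNReal.ofReal |a x| * ENNReal.ofReal |b x|)
    (((ha.abs.measurable).ennreal_ofReal).mul
    ((hb.abs.measurable).ennreal_ofReal))]
  have hpq : Real.HolderConjugate 2 2 := Real.holderConjugate_iff.mpr ⟨one_lt_two, by norm_num⟩
  have := ENNReal.lintegral_mul_le_Lp_mul_Lq ν hpq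
    ((ha.abs.measurable).ennreal_ofReal).aemeasurable
    ((hb.abs.measurable).ennreal_ofReal).aemeasurable
  refine mul_le_mul_right ?_ 2
  refine le_trans (le_of_eq rfl) (this.trans (le_of_eq ?_))
  congr 1
  · congr 1; exact lintegral_congr fun x => ofreal_abs_rpow_two (a x)
  · congr 1; exact lintegral_congr fun x => ofreal_abs_rpow_two (b x)

private lemma Tbound (hV : ContDiff ℝ (⊤ : ℕ∞) V) (hVper : Function.Periodic V 1)
    (hg : ContDiff ℝ (⊤ : ℕ∞) (Function.uncurry g)) (hgper : ∀ q p, g (q + 1) p = g q p) :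
    (∫⁻ x, ENNReal.ofReal ((ufn V δ g x)^4)
        ∂((volume.restrict (Set.Ioc (0:ℝ) 1)).prod volume))
      ≤ ((∫⁻ x, ENNReal.ofReal ((ufn V δ g x)^2)
            ∂((volume.restrict (Set.Ioc (0:ℝ) 1)).prod volume))
          + 2 * ((∫⁻ x, ENNReal.ofReal ((ufn V δ g x)^2)
            ∂((volume.restrict (Set.Ioc (0:ℝ) 1)).prod volume)) ^ (1/2:ℝ)
          * (∫⁻ x, ENNReal.ofReal ((Gpf δ g x * wfn V δ x)^2)
            ∂((volume.restrict (Set.Ioc (0:ℝ) 1)).prod volume)) ^ (1/2:ℝ)))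
        * ((∫⁻ x, ENNReal.ofReal ((ufn V δ g x)^2)
            ∂((volume.restrict (Set.Ioc (0:ℝ) 1)).prod volume))
          + 2 * ((∫⁻ x, ENNReal.ofReal ((ufn V δ g x)^2)
            ∂((volume.restrict (Set.Ioc (0:ℝ) 1)).prod volume)) ^ (1/2:ℝ)
          * (∫⁻ x, ENNReal.ofReal ((Gqf V δ g x * wfn V δ x)^2)
            ∂((volume.restrict (Set.Ioc (0:ℝ) 1)).prod volume)) ^ (1/2:ℝ))) := by
  set ν : Measure (ℝ × ℝ) := (volume.restrict (Set.Ioc (0:ℝ) 1)).prod volume with hν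
  set u := ufn V δ g with hu
  have hu_c : Continuous u := ufn_cont hV hg
  have hGqw_c : Continuous fun x => Gqf V δ g x * wfn V δ x :=
    (Gqf_cont hV hg).mul (wfn_cont hV)
  have hGpw_c : Continuous fun x => Gpf δ g x * wfn V δ x :=
    (Gpf_cont hg).mul (wfn_cont hV)
  set F₁ := fun x : ℝ × ℝ =>
    ENNReal.ofReal ((u x)^2 + |2 * u x * (Gqf V δ g x * wfn V δ x)|) with hF₁def
  set F₂ := fun x : ℝ × ℝ =>
    ENNReal.ofReal ((u x)^2 + |2 * u x * (Gpf δ g x * wfn V δ x)|) with hF₂def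
  have hF₁ : Measurable F₁ :=
    (((hu_c.pow 2).add ((continuous_const.mul hu_c).mul hGqw_c).abs).measurable).ennreal_ofReal
  have hF₂ : Measurable F₂ :=
    (((hu_c.pow 2).add ((continuous_const.mul hu_c).mul hGpw_c).abs).measurable).ennreal_ofReal
  set B₁ := fun p : ℝ => ∫⁻ s in Set.Ioc (0:ℝ) 1, F₁ (s, p) with hB₁def
  set B₂ := fun q : ℝ => ∫⁻ t : ℝ, F₂ (q, t) with hB₂def
  have hB₁ : Measurable B₁ := hF₁.lintegral_prod_left'
  have hB₂ : Measurable B₂ := hF₂.lintegral_prod_right'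
  have hpt : ∀ x : ℝ × ℝ, ENNReal.ofReal ((u x)^4) ≤ B₂ x.1 * B₁ x.2 := by
    intro x
    have e4 : (u x)^4 = (u x)^2 * (u x)^2 := by ring
    rw [e4, ENNReal.ofReal_mul (sq_nonneg _)]
    exact mul_le_mul' (ob2 hV hg x) (ob1 hV hVper hg hgper x)
  have step1 : (∫⁻ x, ENNReal.ofReal ((u x)^4) ∂ν) ≤ ∫⁻ x, B₂ x.1 * B₁ x.2 ∂ν :=
    lintegral_mono hpt
  have step2 : (∫⁻ x, B₂ x.1 * B₁ x.2 ∂ν)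
      = (∫⁻ q in Set.Ioc (0:ℝ) 1, B₂ q) * ∫⁻ p, B₁ p := by
    rw [hν]
    exact lintegral_prod_mul (μ := volume.restrict (Set.Ioc (0:ℝ) 1)) (ν := volume)
      hB₂.aemeasurable hB₁.aemeasurable
  have step3 : (∫⁻ p, B₁ p ∂volume) = ∫⁻ x, F₁ x ∂ν := by
    have hswap := lintegral_lintegral_swap (μ := (volume : Measure ℝ))
      (ν := volume.restrict (Set.Ioc (0:ℝ) 1)) (f := fun p s => F₁ (s, p))
      ((hF₁.comp measurable_swap).aemeasurable)
    have h2 := (lintegral_prod (μ := volume.restrict (Set.Ioc (0:ℝ) 1)) (ν := volume)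
      F₁ hF₁.aemeasurable).symm
    calc (∫⁻ p, B₁ p ∂volume) = ∫⁻ p, ∫⁻ s in Set.Ioc (0:ℝ) 1, F₁ (s, p) ∂volume := rfl
    _ = ∫⁻ s in Set.Ioc (0:ℝ) 1, ∫⁻ p, F₁ (s, p) := hswap
    _ = ∫⁻ x, F₁ x ∂ν := by rw [hν]; exact h2
  have step4 : (∫⁻ q in Set.Ioc (0:ℝ) 1, B₂ q) = ∫⁻ x, F₂ x ∂ν := by
    rw [hν]
    exact (lintegral_prod (μ := volume.restrict (Set.Ioc (0:ℝ) 1)) (ν := volume)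
      F₂ hF₂.aemeasurable).symm
  have split : ∀ (G : ℝ × ℝ → ℝ) (_hG : Continuous G),
      (∫⁻ x, ENNReal.ofReal ((u x)^2 + |2 * u x * G x|) ∂ν)
        = (∫⁻ x, ENNReal.ofReal ((u x)^2) ∂ν) + ∫⁻ x, ENNReal.ofReal (|2 * u x * G x|) ∂ν := by
    intro G _hG
    have : ∀ x, ENNReal.ofReal ((u x)^2 + |2 * u x * G x|)
        = ENNReal.ofReal ((u x)^2) + ENNReal.ofReal (|2 * u x * G x|) := fun x =>
      ENNReal.ofReal_add (sq_nonneg _) (abs_nonneg _)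
    simp_rw [this]
    exact lintegral_add_left ((hu_c.pow 2).measurable.ennreal_ofReal) _
  calc (∫⁻ x, ENNReal.ofReal ((u x)^4) ∂ν)
      ≤ (∫⁻ q in Set.Ioc (0:ℝ) 1, B₂ q) * ∫⁻ p, B₁ p := step1.trans (le_of_eq step2)
  _ = (∫⁻ x, F₂ x ∂ν) * ∫⁻ x, F₁ x ∂ν := by rw [step3, step4]
  _ ≤ _ := by
      rw [hF₂def, hF₁def]
      rw [split _ hGpw_c, split _ hGqw_c]
      exact mul_le_mul' (add_le_add_right (holder_two hu_c hGpw_c) _)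
        (add_le_add_right (holder_two hu_c hGqw_c) _)

private lemma wdens_meas (hV : ContDiff ℝ (⊤ : ℕ∞) V) (c : ℝ) :
    Measurable fun x : ℝ × ℝ => ENNReal.ofReal (Real.exp (-c * (x.2 ^ 2 / 2 + V x.1))) := by
  apply Measurable.ennreal_ofReal
  apply (Real.continuous_exp.comp ?_).measurable
  exact continuous_const.mul (((continuous_snd.pow 2).div_const 2).add
    (hV.continuous.comp continuous_fst))

private lemma cw2 {h : ℝ × ℝ → ℝ} (hV : ContDiff ℝ (⊤ : ℕ∞) V) (hm : Measurable h) :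
    (∫⁻ x, ENNReal.ofReal ((h x * wfn V δ x)^2)
        ∂((volume.restrict (Set.Ioc (0:ℝ) 1)).prod volume))
      = ∫⁻ x, ENNReal.ofReal ((h x)^2) ∂(wMeasure V (δ/2)) := by
  rw [wMeasure, lintegral_withDensity_eq_lintegral_mul _ (wdens_meas hV (δ/2))
    ((hm.pow_const 2).ennreal_ofReal)]
  apply lintegral_congr
  intro x
  simp only [Pi.mul_apply]
  rw [← ENNReal.ofReal_mul (Real.exp_nonneg _)]
  congr 1
  rw [mul_pow, wfn, ← Real.exp_nat_mul]
  push_cast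
  ring_nf

private lemma cw4 {h : ℝ × ℝ → ℝ} (hV : ContDiff ℝ (⊤ : ℕ∞) V) (hm : Measurable h) :
    (∫⁻ x, ENNReal.ofReal ((h x * wfn V δ x)^4)
        ∂((volume.restrict (Set.Ioc (0:ℝ) 1)).prod volume))
      = ∫⁻ x, ENNReal.ofReal ((h x)^4) ∂(wMeasure V δ) := by
  rw [wMeasure, lintegral_withDensity_eq_lintegral_mul _ (wdens_meas hV δ)
    ((hm.pow_const 4).ennreal_ofReal)]
  apply lintegral_congr
  intro x
  simp only [Pi.mul_apply]
  rw [← ENNReal.ofReal_mul (Real.exp_nonneg _)]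
  congr 1
  rw [mul_pow, wfn, ← Real.exp_nat_mul]
  push_cast
  ring_nf

private lemma Aeq {h : ℝ × ℝ → ℝ} {μ : Measure (ℝ × ℝ)} (hm : MemLp h 2 μ) :
    (∫⁻ x, ENNReal.ofReal ((h x)^2) ∂μ)
      = ENNReal.ofReal ((Real.sqrt (∫ x, (h x)^2 ∂μ))^2) := by
  have hint := hm.integrable_sq
  rw [← ofReal_integral_eq_lintegral_ofReal hint (ae_of_all _ fun x => sq_nonneg _)]
  congr 1
  rw [Real.sq_sqrt (integral_nonneg fun x => sq_nonneg _)]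

private lemma half_pow {N : ℝ} (hN : 0 ≤ N) :
    (ENNReal.ofReal (N^2)) ^ (1/2:ℝ) = ENNReal.ofReal N := by
  rw [ENNReal.ofReal_rpow_of_nonneg (sq_nonneg N) (by norm_num)]
  congr 1
  rw [← Real.sqrt_eq_rpow, Real.sqrt_sq hN]

private lemma ofreal_abs_rpow_two' (r : ℝ) :
    ((‖r‖₊ : ℝ≥0∞)) ^ (2:ℝ) = ENNReal.ofReal (r^2) := by
  rw [← enorm_eq_nnnorm, Real.enorm_eq_ofReal_abs, ENNReal.ofReal_rpow_of_nonneg (abs_nonneg r) (by norm_num)]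
  congr 1
  rw [show (2:ℝ) = ((2:ℕ):ℝ) by norm_num, Real.rpow_natCast]
  exact sq_abs r

private lemma elp_eq {μ : Measure (ℝ × ℝ)} (f : ℝ × ℝ → ℝ) :
    eLpNorm f 2 μ = (∫⁻ x, ENNReal.ofReal ((f x)^2) ∂μ) ^ (1/2:ℝ) := by
  rw [eLpNorm_eq_lintegral_rpow_enorm_toReal two_ne_zero ENNReal.ofNat_ne_top]
  have h2 : (2:ℝ≥0∞).toReal = (2:ℝ) := by simp
  rw [h2]
  congr 1
  exact lintegral_congr fun x => ofreal_abs_rpow_two' (f x)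

private lemma ofreal_abs_rpow_four' (r : ℝ) :
    ((‖r‖₊ : ℝ≥0∞)) ^ (4:ℝ) = ENNReal.ofReal (r^4) := by
  rw [← enorm_eq_nnnorm, Real.enorm_eq_ofReal_abs, ENNReal.ofReal_rpow_of_nonneg (abs_nonneg r) (by norm_num)]
  congr 1
  rw [show (4:ℝ) = ((4:ℕ):ℝ) by norm_num, Real.rpow_natCast]
  rw [pow_abs, abs_of_nonneg (by positivity)]

private lemma elp4_eq {μ : Measure (ℝ × ℝ)} (f : ℝ × ℝ → ℝ) :
    eLpNorm f 4 μ = (∫⁻ x, ENNReal.ofReal ((f x)^4) ∂μ) ^ (1/4:ℝ) := by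
  rw [eLpNorm_eq_lintegral_rpow_enorm_toReal (by norm_num) (by norm_num)]
  have h4 : (4:ℝ≥0∞).toReal = (4:ℝ) := by simp
  rw [h4]
  congr 1
  exact lintegral_congr fun x => ofreal_abs_rpow_four' (f x)

end Aux

theorem L4_bound_from_weighted_H1
    (δ : ℝ) (hδ : 0 < δ)
    (V : ℝ → ℝ) (hV : ContDiff ℝ (⊤ : ℕ∞) V) (hVper : Function.Periodic V 1) :
    ∃ C : ℝ, 0 < C ∧ ∀ g : ℝ → ℝ → ℝ,
      ContDiff ℝ (⊤ : ℕ∞) (Function.uncurry g) →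
      (∀ q p, g (q + 1) p = g q p) →
      MemLp (fun x : ℝ × ℝ => g x.1 x.2) 2 (wMeasure V (δ / 2)) →
      MemLp (pdp g) 2 (wMeasure V (δ / 2)) →
      MemLp (pdq g) 2 (wMeasure V (δ / 2)) →
      MemLp (fun x : ℝ × ℝ => x.2 * g x.1 x.2) 2 (wMeasure V (δ / 2)) →
      MemLp (fun x : ℝ × ℝ => g x.1 x.2) 4 (wMeasure V δ) ∧
      (∫ x, (g x.1 x.2) ^ 4 ∂(wMeasure V δ)) ^ ((1:ℝ)/2)
        ≤ C * wNorm V (δ/2) (fun x => g x.1 x.2)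
            * (wNorm V (δ/2) (fun x => g x.1 x.2)
              + wNorm V (δ/2) (pdp g)
              + wNorm V (δ/2) (pdq g)
              + wNorm V (δ/2) (fun x => x.2 * g x.1 x.2)) := by
  classical
  obtain ⟨M0, hM0b⟩ := (isCompact_Icc (a := (0:ℝ)) (b := 1)).exists_bound_of_continuousOn
    ((hV.continuous_deriv (by simp)).continuousOn)
  set M := max M0 0 with hMdef
  have hM0 : 0 ≤ M := le_max_right _ _
  have hM : ∀ q ∈ Set.Icc (0:ℝ) 1, |deriv V q| ≤ M := fun q hq =>
    le_trans (by simpa [Real.norm_eq_abs] using hM0b q hq) (le_max_left _ _)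
  refine ⟨1 + δ/4 + δ*M/4, by positivity, ?_⟩
  intro g hg hgper hg2 hp2 hq2 hpg2
  set ν : Measure (ℝ × ℝ) := (volume.restrict (Set.Ioc (0:ℝ) 1)).prod volume with hνdef
  set μ2 := wMeasure V (δ/2) with hμ2def
  -- a.e. the first coordinate is in (0,1]
  have aeIoc : ∀ᵐ x ∂μ2, x.1 ∈ Set.Ioc (0:ℝ) 1 := by
    have h1 : ∀ᵐ x ∂ν, x.1 ∈ Set.Ioc (0:ℝ) 1 := by
      rw [ae_iff]
      have hset : {x : ℝ × ℝ | ¬ x.1 ∈ Set.Ioc (0:ℝ) 1}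
          = (Set.Ioc (0:ℝ) 1)ᶜ ×ˢ (Set.univ : Set ℝ) := by
        ext x; simp
      rw [hνdef, hset, Measure.prod_prod, Measure.restrict_apply measurableSet_Ioc.compl]
      simp
    exact (withDensity_absolutelyContinuous ν _).ae_le h1
  -- measurability
  have hgm : Measurable (fun x : ℝ × ℝ => g x.1 x.2) := (gfn_cont hg).measurable
  have hGqm : Measurable (Gqf V δ g) := (Gqf_cont hV hg).measurable
  have hGpm : Measurable (Gpf δ g) := (Gpf_cont hg).measurable
  -- norms
  set Na := wNorm V (δ/2) (fun x => g x.1 x.2) with hNa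
  set Np := wNorm V (δ/2) (pdp g) with hNp
  set Nq := wNorm V (δ/2) (pdq g) with hNq
  set Npg := wNorm V (δ/2) (fun x => x.2 * g x.1 x.2) with hNpg
  have hNa0 : 0 ≤ Na := Real.sqrt_nonneg _
  have hNp0 : 0 ≤ Np := Real.sqrt_nonneg _
  have hNq0 : 0 ≤ Nq := Real.sqrt_nonneg _
  have hNpg0 : 0 ≤ Npg := Real.sqrt_nonneg _
  -- the main ENNReal quantities
  set A := ∫⁻ x, ENNReal.ofReal ((g x.1 x.2 * wfn V δ x)^2) ∂ν with hAdef
  set Q := ∫⁻ x, ENNReal.ofReal ((Gqf V δ g x * wfn V δ x)^2) ∂ν with hQdef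
  set P := ∫⁻ x, ENNReal.ofReal ((Gpf δ g x * wfn V δ x)^2) ∂ν with hPdef
  set T := ∫⁻ x, ENNReal.ofReal ((g x.1 x.2 * wfn V δ x)^4) ∂ν with hTdef
  -- A in terms of Na
  have hA : A = ENNReal.ofReal (Na^2) := by
    have h1 : A = ∫⁻ x, ENNReal.ofReal ((g x.1 x.2)^2) ∂μ2 := cw2 hV hgm
    rw [h1, Aeq hg2]
    try rfl
  have hA12 : A ^ (1/2:ℝ) = ENNReal.ofReal Na := by rw [hA, half_pow hNa0]
  -- eLpNorm identifications
  have elp_a : eLpNorm (fun x : ℝ × ℝ => g x.1 x.2) 2 μ2 = ENNReal.ofReal Na := by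
    rw [elp_eq, Aeq hg2, half_pow (Real.sqrt_nonneg _)]
    try rfl
  have elp_q : eLpNorm (pdq g) 2 μ2 = ENNReal.ofReal Nq := by
    rw [elp_eq, Aeq hq2, half_pow (Real.sqrt_nonneg _)]
    try rfl
  have elp_p : eLpNorm (pdp g) 2 μ2 = ENNReal.ofReal Np := by
    rw [elp_eq, Aeq hp2, half_pow (Real.sqrt_nonneg _)]
    try rfl
  have elp_pg : eLpNorm (fun x : ℝ × ℝ => x.2 * g x.1 x.2) 2 μ2 = ENNReal.ofReal Npg := by
    rw [elp_eq, Aeq hpg2, half_pow (Real.sqrt_nonneg _)]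
    try rfl
  -- Q bound
  have hQ12 : Q ^ (1/2:ℝ) ≤ ENNReal.ofReal (Nq + δ*M/4 * Na) := by
    have h1 : Q = ∫⁻ x, ENNReal.ofReal ((Gqf V δ g x)^2) ∂μ2 := cw2 hV hGqm
    have h2 : Q ^ (1/2:ℝ) = eLpNorm (Gqf V δ g) 2 μ2 := by rw [h1, elp_eq]
    rw [h2]
    set h2f := fun x : ℝ × ℝ => δ/4 * deriv V x.1 * g x.1 x.2 with hh2f
    have hsub : eLpNorm (Gqf V δ g) 2 μ2 ≤ eLpNorm (pdq g) 2 μ2 + eLpNorm h2f 2 μ2 := by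
      have h3 : Gqf V δ g = pdq g - h2f := rfl
      rw [h3]
      exact eLpNorm_sub_le ((pdq_cont hg).aestronglyMeasurable)
        (((continuous_const.mul ((hV.continuous_deriv (by simp)).comp continuous_fst)).mul
          (gfn_cont hg)).aestronglyMeasurable) one_le_two
    have hmono : eLpNorm h2f 2 μ2
        ≤ eLpNorm (fun x : ℝ × ℝ => δ*M/4 * g x.1 x.2) 2 μ2 := by
      apply eLpNorm_mono_ae
      filter_upwards [aeIoc] with x hx
      rw [Real.norm_eq_abs, Real.norm_eq_abs, hh2f]
      have hV' : |deriv V x.1| ≤ M := hM x.1 (Set.Ioc_subset_Icc_self hx)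
      rw [abs_mul, abs_mul, abs_mul]
      have e1 : |δ/4| = δ/4 := abs_of_nonneg (by positivity)
      have e2 : |δ*M/4| = δ*M/4 := abs_of_nonneg (by positivity)
      rw [e1, e2]
      have hkey := mul_le_mul_of_nonneg_right
        (mul_le_mul_of_nonneg_left hV' (by positivity : (0:ℝ) ≤ δ/4)) (abs_nonneg (g x.1 x.2))
      calc δ/4 * |deriv V x.1| * |g x.1 x.2| ≤ δ/4 * M * |g x.1 x.2| := hkey
      _ = δ*M/4 * |g x.1 x.2| := by ring
    have hsmul : eLpNorm (fun x : ℝ × ℝ => δ*M/4 * g x.1 x.2) 2 μ2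
        = ENNReal.ofReal (δ*M/4) * ENNReal.ofReal Na := by
      have h4 : (fun x : ℝ × ℝ => δ*M/4 * g x.1 x.2)
          = (δ*M/4 : ℝ) • (fun x : ℝ × ℝ => g x.1 x.2) := rfl
      rw [h4, eLpNorm_const_smul, elp_a]
      rw [Real.enorm_eq_ofReal (by positivity)]
      try rfl
    calc eLpNorm (Gqf V δ g) 2 μ2 ≤ eLpNorm (pdq g) 2 μ2 + eLpNorm h2f 2 μ2 := hsub
    _ ≤ ENNReal.ofReal Nq + ENNReal.ofReal (δ*M/4) * ENNReal.ofReal Na := by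
        rw [elp_q]; exact add_le_add_right (hmono.trans (le_of_eq hsmul)) _
    _ = ENNReal.ofReal (Nq + δ*M/4 * Na) := by
        rw [← ENNReal.ofReal_mul (by positivity), ← ENNReal.ofReal_add hNq0 (by positivity)]
  -- P bound
  have hP12 : P ^ (1/2:ℝ) ≤ ENNReal.ofReal (Np + δ/4 * Npg) := by
    have h1 : P = ∫⁻ x, ENNReal.ofReal ((Gpf δ g x)^2) ∂μ2 := cw2 hV hGpm
    have h2 : P ^ (1/2:ℝ) = eLpNorm (Gpf δ g) 2 μ2 := by rw [h1, elp_eq]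
    rw [h2]
    set h2f := fun x : ℝ × ℝ => δ/4 * x.2 * g x.1 x.2 with hh2f
    have hsub : eLpNorm (Gpf δ g) 2 μ2 ≤ eLpNorm (pdp g) 2 μ2 + eLpNorm h2f 2 μ2 := by
      have h3 : Gpf δ g = pdp g - h2f := rfl
      rw [h3]
      exact eLpNorm_sub_le ((pdp_cont hg).aestronglyMeasurable)
        (((continuous_const.mul continuous_snd).mul (gfn_cont hg)).aestronglyMeasurable)
        one_le_two
    have hsmul : eLpNorm h2f 2 μ2 = ENNReal.ofReal (δ/4) * ENNReal.ofReal Npg := by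
      have h4 : h2f = (δ/4 : ℝ) • (fun x : ℝ × ℝ => x.2 * g x.1 x.2) := by
        funext x; simp [hh2f]; ring
      rw [h4, eLpNorm_const_smul, elp_pg]
      rw [Real.enorm_eq_ofReal (by positivity)]
      try rfl
    calc eLpNorm (Gpf δ g) 2 μ2 ≤ eLpNorm (pdp g) 2 μ2 + eLpNorm h2f 2 μ2 := hsub
    _ ≤ ENNReal.ofReal Np + ENNReal.ofReal (δ/4) * ENNReal.ofReal Npg := by
        rw [elp_p, hsmul]
    _ = ENNReal.ofReal (Np + δ/4 * Npg) := by
        rw [← ENNReal.ofReal_mul (by positivity), ← ENNReal.ofReal_add hNp0 (by positivity)]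
  -- combine
  set pp := Np + δ/4 * Npg with hppdef
  set qq := Nq + δ*M/4 * Na with hqqdef
  have hpp0 : 0 ≤ pp := by positivity
  have hqq0 : 0 ≤ qq := by positivity
  have hTb : T ≤ ENNReal.ofReal ((Na^2 + 2*(Na*pp)) * (Na^2 + 2*(Na*qq))) := by
    have h1 := Tbound (δ := δ) hV hVper hg hgper
    simp only [ufn] at h1
    rw [← hνdef, ← hAdef, ← hPdef, ← hQdef, ← hTdef] at h1
    have h2 : (A + 2 * (A ^ (1/2:ℝ) * P ^ (1/2:ℝ))) * (A + 2 * (A ^ (1/2:ℝ) * Q ^ (1/2:ℝ)))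
        ≤ ENNReal.ofReal (Na^2 + 2*(Na*pp)) * ENNReal.ofReal (Na^2 + 2*(Na*qq)) := by
      apply mul_le_mul'
      · rw [hA12, hA]
        calc ENNReal.ofReal (Na^2) + 2 * (ENNReal.ofReal Na * P ^ (1/2:ℝ))
            ≤ ENNReal.ofReal (Na^2) + 2 * (ENNReal.ofReal Na * ENNReal.ofReal pp) :=
            add_le_add_right (mul_le_mul_right (mul_le_mul_right hP12 _) _) _
        _ = ENNReal.ofReal (Na^2 + 2*(Na*pp)) := by
            rw [← ENNReal.ofReal_mul hNa0, ← ENNReal.ofReal_ofNat,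
              ← ENNReal.ofReal_mul (by norm_num), ← ENNReal.ofReal_add (sq_nonneg _)
              (by positivity)]
      · rw [hA12, hA]
        calc ENNReal.ofReal (Na^2) + 2 * (ENNReal.ofReal Na * Q ^ (1/2:ℝ))
            ≤ ENNReal.ofReal (Na^2) + 2 * (ENNReal.ofReal Na * ENNReal.ofReal qq) :=
            add_le_add_right (mul_le_mul_right (mul_le_mul_right hQ12 _) _) _
        _ = ENNReal.ofReal (Na^2 + 2*(Na*qq)) := by
            rw [← ENNReal.ofReal_mul hNa0, ← ENNReal.ofReal_ofNat,
              ← ENNReal.ofReal_mul (by norm_num), ← ENNReal.ofReal_add (sq_nonneg _)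
              (by positivity)]
    calc T ≤ (A + 2 * (A ^ (1/2:ℝ) * P ^ (1/2:ℝ))) * (A + 2 * (A ^ (1/2:ℝ) * Q ^ (1/2:ℝ))) := h1
    _ ≤ ENNReal.ofReal (Na^2 + 2*(Na*pp)) * ENNReal.ofReal (Na^2 + 2*(Na*qq)) := h2
    _ = ENNReal.ofReal ((Na^2 + 2*(Na*pp)) * (Na^2 + 2*(Na*qq))) :=
        (ENNReal.ofReal_mul (by positivity)).symm
  -- T as integral over the weighted measure
  have hT4 : T = ∫⁻ x, ENNReal.ofReal ((g x.1 x.2)^4) ∂(wMeasure V δ) := cw4 hV hgm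
  -- MemLp 4
  have hmem : MemLp (fun x : ℝ × ℝ => g x.1 x.2) 4 (wMeasure V δ) := by
    refine ⟨(gfn_cont hg).aestronglyMeasurable, ?_⟩
    rw [elp4_eq, ← hT4]
    exact ENNReal.rpow_lt_top_of_nonneg (by norm_num)
      (ne_top_of_le_ne_top ENNReal.ofReal_ne_top hTb)
  refine ⟨hmem, ?_⟩
  -- the real inequality
  have hint_eq : (∫ x, (g x.1 x.2) ^ 4 ∂(wMeasure V δ)) = T.toReal := by
    rw [hT4]
    rw [integral_eq_lintegral_of_nonneg_ae (f := fun x : ℝ × ℝ => (g x.1 x.2) ^ 4) (ae_of_all _ fun x => by positivity)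
      (((gfn_cont hg).pow 4).aestronglyMeasurable)]
  rw [hint_eq]
  have hlhs : T.toReal ^ ((1:ℝ)/2) = (T ^ ((1:ℝ)/2)).toReal := ENNReal.toReal_rpow _ _
  rw [hlhs]
  have hT12 : T ^ ((1:ℝ)/2)
      ≤ ENNReal.ofReal (Real.sqrt ((Na^2 + 2*(Na*pp)) * (Na^2 + 2*(Na*qq)))) := by
    calc T ^ ((1:ℝ)/2)
        ≤ (ENNReal.ofReal ((Na^2 + 2*(Na*pp)) * (Na^2 + 2*(Na*qq)))) ^ ((1:ℝ)/2) :=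
        ENNReal.rpow_le_rpow hTb (by norm_num)
    _ = ENNReal.ofReal (Real.sqrt ((Na^2 + 2*(Na*pp)) * (Na^2 + 2*(Na*qq)))) := by
        rw [ENNReal.ofReal_rpow_of_nonneg (by positivity) (by norm_num),
          ← Real.sqrt_eq_rpow]
  have hstep : (T ^ ((1:ℝ)/2)).toReal
      ≤ Real.sqrt ((Na^2 + 2*(Na*pp)) * (Na^2 + 2*(Na*qq))) := by
    have := ENNReal.toReal_mono ENNReal.ofReal_ne_top hT12
    rwa [ENNReal.toReal_ofReal (Real.sqrt_nonneg _)] at this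
  refine hstep.trans ?_
  -- pure real arithmetic
  have hR : Real.sqrt ((Na^2 + 2*(Na*pp)) * (Na^2 + 2*(Na*qq))) ≤ Na * (Na + pp + qq) := by
    have hxy : (Na^2 + 2*(Na*pp)) * (Na^2 + 2*(Na*qq)) ≤ (Na * (Na + pp + qq))^2 := by
      nlinarith [sq_nonneg ((pp - qq) * Na)]
    calc Real.sqrt ((Na^2 + 2*(Na*pp)) * (Na^2 + 2*(Na*qq)))
        ≤ Real.sqrt ((Na * (Na + pp + qq))^2) := Real.sqrt_le_sqrt hxy
    _ = Na * (Na + pp + qq) := Real.sqrt_sq (by positivity)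
  refine hR.trans ?_
  rw [hppdef, hqqdef]
  have h1 : Na + (Np + δ/4 * Npg) + (Nq + δ*M/4 * Na)
      ≤ (1 + δ/4 + δ*M/4) * (Na + Np + Nq + Npg) := by
    nlinarith [mul_nonneg (mul_nonneg hδ.le hM0) hNa0, mul_nonneg hδ.le hNa0,
      mul_nonneg (mul_nonneg hδ.le hM0) hNp0, mul_nonneg hδ.le hNp0,
      mul_nonneg (mul_nonneg hδ.le hM0) hNq0, mul_nonneg hδ.le hNq0,
      mul_nonneg (mul_nonneg hδ.le hM0) hNpg0, mul_nonneg hδ.le hNpg0]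
  nlinarith [mul_le_mul_of_nonneg_left h1 hNa0]
end
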